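/- arXiv:1606.01891 — 3 statements merged into one kernel-verified Lean document; each statement's English description precedes it below -/
import Mathlib

section
/- Let ġ be a finite-dimensional simple complex Lie algebra with Cartan subalgebra ḣ spanned by coroots h_1,…,h_l, and let g = (ġ ⊗ ℂ[t,t^{-1}]) ⊕ ℂK ⊕ ℂd be the associated untwisted affine Kac-Moody algebra, with Cartan subalgebra h = ℂh_1 + ⋯ + ℂh_l + ℂK + ℂd. Suppose M is a g-module that is free of rank 1 over U(h), identified with ℂ[h_1,…,h_l,K,d], and set R_{ik} = (h_i ⊗ t^k)·1 ∈ M. Then for every g ∈ M and every integer k, (h_i ⊗ t^k)·g = τ^k(g)·R_{ik}, where τ is the ℂ-algebra automorphism of ℂ[h_1,…,h_l,K,d] sending d to d−1 and fixing h_1,…,h_l,K. -/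
open scoped BigOperators
open MvPolynomial

namespace KM

/-- The untwisted affine Kac-Moody algebra
`L = (ġ ⊗ ℂ[t,t⁻¹]) ⊕ ℂK ⊕ ℂd` attached to a finite dimensional simple
complex Lie algebra `ġ` with invariant bilinear form `B`:
`T k x` plays the role of `x ⊗ t^k`, and the bracket is
`[x⊗t^k + λ₁K + μ₁d, y⊗t^m + λ₂K + μ₂d] = [x,y]⊗t^{k+m} + μ₁ m y⊗t^m − μ₂ k x⊗t^k + k δ_{k,−m} B(x,y) K`.
`Hd` is a Cartan subalgebra of `ġ` with basis `bas = (h_1, …, h_l)`, so that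
`h = ℂh_1 + ⋯ + ℂh_l + ℂK + ℂd` is the Cartan subalgebra of `L`. -/
structure UntwistedAffine (l : ℕ) where
  gd : Type
  [gdLR : LieRing gd]
  [gdLA : LieAlgebra ℂ gd]
  [gdFD : FiniteDimensional ℂ gd]
  gdSimple : LieAlgebra.IsSimple ℂ gd
  B : gd →ₗ[ℂ] gd →ₗ[ℂ] ℂ
  Bsymm : ∀ x y : gd, B x y = B y x
  Binv : ∀ x y z : gd, B ⁅x, y⁆ z = B x ⁅y, z⁆
  L : Type
  [LLR : LieRing L]
  [LLA : LieAlgebra ℂ L]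
  T : ℤ → gd →ₗ[ℂ] L
  K : L
  d : L
  indep : ∀ (s : Finset ℤ) (x : ℤ → gd) (c₁ c₂ : ℂ),
    (∑ k ∈ s, T k (x k)) + c₁ • K + c₂ • d = 0 → (∀ k ∈ s, x k = 0) ∧ c₁ = 0 ∧ c₂ = 0
  span : Submodule.span ℂ ({K, d} ∪ ⋃ k : ℤ, Set.range (T k)) = ⊤
  lie_T_T : ∀ (k m : ℤ) (x y : gd),
    ⁅T k x, T m y⁆ = T (k + m) ⁅x, y⁆ + (if k + m = 0 then (k : ℂ) * B x y else 0) • K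
  lie_K_T : ∀ (k : ℤ) (x : gd), ⁅K, T k x⁆ = 0
  lie_K_d : ⁅K, d⁆ = 0
  lie_d_T : ∀ (k : ℤ) (x : gd), ⁅d, T k x⁆ = (k : ℂ) • T k x
  Hd : LieSubalgebra ℂ gd
  HdCartan : Hd.IsCartanSubalgebra
  HdAbelian : ∀ x y : Hd, ⁅x, y⁆ = 0
  bas : Module.Basis (Fin l) ℂ Hd

attribute [instance] UntwistedAffine.gdLR UntwistedAffine.gdLA UntwistedAffine.gdFD
  UntwistedAffine.LLR UntwistedAffine.LLA

attribute [local instance] LieRing.ofAssociativeRing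

/-- The module `U(h)` identified with the polynomial ring
`ℂ[h_1,…,h_l,K,d]`: variable `Sum.inl i` is `h_i`, `Sum.inr false` is `K`
and `Sum.inr true` is `d`. -/
abbrev AffPoly (l : ℕ) := MvPolynomial (Fin l ⊕ Bool) ℂ

/-- Multiplication by a polynomial, as an endomorphism. -/
noncomputable def affMul {l : ℕ} (p : AffPoly l) : Module.End ℂ (AffPoly l) :=
  LinearMap.mulLeft ℂ p

/-- `τ^k` : the automorphism of `ℂ[h_1,…,h_l,K,d]` sending `d ↦ d - k` and fixing
all other variables. -/
noncomputable def tau (l : ℕ) (k : ℤ) : AffPoly l →ₐ[ℂ] AffPoly l :=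
  aeval (fun j => X j - if j = Sum.inr true then C (k : ℂ) else 0)

/-! Each generator of `h` acts by multiplication, and its bracket with `h_i ⊗ t^k` is a scalar
multiple of `h_i ⊗ t^k` (zero for `h_j` and `K`, `k` for `d`). Hence `A = ρ (h_i ⊗ t^k)` satisfies
`A (X_j q) = τ^k(X_j) A q` for every variable, and since `τ^k` is multiplicative this propagates
to `A (g q) = τ^k(g) A q` for every polynomial `g`; take `q = 1`. -/

theorem _root_.MvPolynomial.linearMap_mul_eq_of_X_mul {R σ S : Type*} [CommSemiring R]
    [CommSemiring S] [Algebra R S] {A : MvPolynomial σ R →ₗ[R] S}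
    {φ : MvPolynomial σ R →ₐ[R] S} (hA : ∀ j q, A (X j * q) = φ (X j) * A q)
    (p q : MvPolynomial σ R) : A (p * q) = φ p * A q := by
  induction p using MvPolynomial.induction_on generalizing q with
  | C a =>
    rw [← smul_eq_C_mul, map_smul, ← algebraMap_eq, AlgHom.commutes, Algebra.smul_def]
  | add p p' hp hp' => rw [add_mul, map_add, hp, hp', map_add, add_mul]
  | mul_X p j hp => rw [mul_comm p, mul_assoc, hA, hp, ← mul_assoc, ← map_mul]

theorem lieHom_apply_mul_of_lie_eq_smul {R L S : Type*} [CommRing R] [LieRing L]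
    [LieAlgebra R L] [CommRing S] [Algebra R S] (ρ : L →ₗ⁅R⁆ Module.End R S) {x y : L}
    {p : S} {c : R} (hx : ρ x = LinearMap.mulLeft R p) (hxy : ⁅x, y⁆ = c • y) (q : S) :
    ρ y (p * q) = (p - algebraMap R S c) * ρ y q := by
  have h := LinearMap.congr_fun (ρ.map_lie x y) q
  rw [hxy, map_smul, LinearMap.smul_apply, Algebra.smul_def, Ring.lie_def, hx] at h
  simp only [LinearMap.sub_apply, Module.End.mul_apply, LinearMap.mulLeft_apply] at h
  linear_combination h

theorem UntwistedAffine.lie_T_zero_T_of_lie_eq_zero {l : ℕ} (U : UntwistedAffine l) (k : ℤ)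
    {x y : U.gd} (hxy : ⁅x, y⁆ = 0) : ⁅U.T 0 x, U.T k y⁆ = 0 := by
  rw [U.lie_T_T, hxy]
  simp

theorem tau_X (l : ℕ) (k : ℤ) (j : Fin l ⊕ Bool) :
    tau l k (X j) = X j - if j = Sum.inr true then C (k : ℂ) else 0 := by
  simp [tau]

/-- Lemma 4: let `M ∈ H(g)` for the untwisted affine Kac-Moody algebra `g`,
identified with `ℂ[h_1,…,h_l,K,d]` (so that `h_i`, `K`, `d` act by
multiplication), and set `R_{ik} = (h_i ⊗ t^k)·1`.  Then
`(h_i ⊗ t^k) · g = τ^k(g) · R_{ik}` for all `g ∈ M`, where `τ(d) = d - 1` and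
`τ` fixes `h_1,…,h_l,K`. -/
theorem affine_loop_action (l : ℕ) (U : UntwistedAffine l)
    (ρ : U.L →ₗ⁅ℂ⁆ Module.End ℂ (AffPoly l))
    (hH : ∀ i : Fin l, ρ (U.T 0 (U.bas i)) = affMul (X (Sum.inl i)))
    (hK : ρ U.K = affMul (X (Sum.inr false)))
    (hd : ρ U.d = affMul (X (Sum.inr true))) :
    ∀ (i : Fin l) (k : ℤ) (g : AffPoly l),
      ρ (U.T k (U.bas i)) g = tau l k g * (ρ (U.T k (U.bas i)) 1) := by
  intro i k g
  have hcomm : ∀ j q,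
      ρ (U.T k (U.bas i)) (X j * q) = tau l k (X j) * ρ (U.T k (U.bas i)) q := by
    rintro (j | _ | _) q <;> rw [tau_X]
    · have hHd : ⁅(U.bas j : U.gd), (U.bas i : U.gd)⁆ = 0 := by
        rw [← LieSubalgebra.coe_bracket, U.HdAbelian, ZeroMemClass.coe_zero]
      simpa using lieHom_apply_mul_of_lie_eq_smul ρ (hH j) (c := 0)
        (by rw [zero_smul, U.lie_T_zero_T_of_lie_eq_zero k hHd]) q
    · simpa using lieHom_apply_mul_of_lie_eq_smul ρ hK (c := 0)
        (by rw [zero_smul, U.lie_K_T]) q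
    · simpa [Algebra.algebraMap_eq_smul_one, smul_eq_C_mul] using
        lieHom_apply_mul_of_lie_eq_smul ρ hd (U.lie_d_T k _) q
  simpa using MvPolynomial.linearMap_mul_eq_of_X_mul hcomm g 1

end KM
end

section
/- Let g be the Kac-Moody algebra associated to an invertible generalized Cartan matrix A(r,s) = [[2,−r],[−s,2]], with Cartan subalgebra h having basis (H_1,H_2)^T = A^{-1}(α_1^∨,α_2^∨)^T, so that [H_i,e_j] = δ_{ij}e_j and [H_i,f_j] = −δ_{ij}f_j. If M is a g-module whose restriction to h is free of rank 1 over U(h), identified with ℂ[H_1,H_2], then there exist nonzero polynomials E_i = e_i·1 and F_i = f_i·1 in ℂ[H_1,H_2] such that for all g ∈ ℂ[H_1,H_2] and i ∈ {1,2}: H_i·g = H_i g, e_i·g = E_i σ_i(g), and f_i·g = F_i σ_i^{-1}(g), where σ_i is the ℂ-algebra automorphism of ℂ[H_1,H_2] sending H_j to H_j − δ_{i,j}. -/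
open scoped BigOperators
open MvPolynomial

attribute [local instance 100] LieRing.ofAssociativeRing

namespace KM

structure GCM (n : ℕ) where
  A : Matrix (Fin n) (Fin n) ℤ
  diag : ∀ i, A i i = 2
  offdiag : ∀ i j, i ≠ j → A i j ≤ 0
  zero_symm : ∀ i j, A i j = 0 → A j i = 0

def GCM.Indecomposable {n : ℕ} (g : GCM n) : Prop :=
  ∀ s : Set (Fin n), (∀ i ∈ s, ∀ j, j ∉ s → g.A i j = 0) → s = ∅ ∨ s = Set.univ

/-- The data of a Kac-Moody algebra `g(A)` on a complex Lie algebra `L`: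
an abelian Cartan subalgebra of dimension `2n - rank A`, linearly independent
simple roots and coroots realizing `A`, Chevalley generators `e i`, `f i`
satisfying the defining relations, such that `L` is generated by them and
every ideal intersecting the Cartan subalgebra trivially is zero (this
characterizes `g(A) = g̃(A)/𝔱` up to isomorphism). -/
structure KacMoodyData {n : ℕ} (g : GCM n) (L : Type) [LieRing L] [LieAlgebra ℂ L] where
  H : LieSubalgebra ℂ L
  abelian : ∀ x y : H, ⁅x, y⁆ = 0
  hdim : Module.finrank ℂ H = 2 * n - (g.A.map ((↑) : ℤ → ℚ)).rank
  root : Fin n → (H →ₗ[ℂ] ℂ)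
  coroot : Fin n → H
  root_indep : LinearIndependent ℂ root
  coroot_indep : LinearIndependent ℂ coroot
  pairing : ∀ i j, root j (coroot i) = (g.A i j : ℂ)
  e : Fin n → L
  f : Fin n → L
  lie_h_e : ∀ (x : H) (i : Fin n), ⁅(x : L), e i⁆ = root i x • e i
  lie_h_f : ∀ (x : H) (i : Fin n), ⁅(x : L), f i⁆ = -(root i x) • f i
  lie_e_f : ∀ i j, ⁅e i, f j⁆ = if i = j then ((coroot i : L)) else 0
  generates : LieSubalgebra.lieSpan ℂ L ((H : Set L) ∪ Set.range e ∪ Set.range f) = ⊤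
  ideal_triv : ∀ I : LieIdeal ℂ L, (∀ x : H, (x : L) ∈ I → x = 0) → I = ⊥

/-- An object of the category `H(g)`: a `g`-module whose restriction to the
Cartan subalgebra `H` is a free `U(H)`-module of rank 1. -/
structure HObject (L : Type) [LieRing L] [LieAlgebra ℂ L] (H : LieSubalgebra ℂ L) where
  M : Type
  [iAdd : AddCommGroup M]
  [iMod : Module ℂ M]
  [iLRM : LieRingModule L M]
  [iLM : LieModule ℂ L M]
  free : ∃ v : M, Function.Bijective (fun u : UniversalEnvelopingAlgebra ℂ H =>
    (UniversalEnvelopingAlgebra.lift ℂ ((LieModule.toEnd ℂ L M).comp H.incl) u) v)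

/-- The basis `(H_1, …, H_n)ᵀ = A⁻¹ (α_1^∨, …, α_n^∨)ᵀ` of the Cartan subalgebra. -/
noncomputable def Hb {n : ℕ} {g : GCM n} {L : Type} [LieRing L] [LieAlgebra ℂ L]
    (D : KacMoodyData g L) (i : Fin n) : L :=
  ∑ j, ((g.A.map ((↑) : ℤ → ℂ))⁻¹ i j) • ((D.coroot j : L))

/-- Multiplication by the variable `X i` as an endomorphism of `ℂ[H_1,…,H_n]`. -/
noncomputable def mulX {n : ℕ} (i : Fin n) :
    Module.End ℂ (MvPolynomial (Fin n) ℂ) :=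
  LinearMap.mulLeft ℂ (X i)

/-- The substitution `H_j ↦ H_j - c·δ_{ij}` as an endomorphism; `shiftOp i 1 = σ_i`,
`shiftOp i (-1) = σ_i⁻¹`. -/
noncomputable def shiftOp {n : ℕ} (i : Fin n) (c : ℂ) :
    Module.End ℂ (MvPolynomial (Fin n) ℂ) :=
  (aeval (fun j => X j - if j = i then C c else 0) :
    MvPolynomial (Fin n) ℂ →ₐ[ℂ] MvPolynomial (Fin n) ℂ).toLinearMap

/-! Since `A⁻¹` turns the coroots into the basis dual to the simple roots, `H_j` acts on
`e_i` (resp. `f_i`) by `δ_{ji}` (resp. `-δ_{ji}`).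
In the representation, `[X_j, ρ e_i] = δ_{ji} ρ e_i` says that `ρ e_i` is `E_i` times the
ring endomorphism `σ_i`, because both sides agree on `1` and satisfy the same commutation rule
with every `X_j`; likewise for `f_i` and `σ_i⁻¹`. Finally `E_i` and `F_i` cannot vanish,
since `[ρ e_i, ρ f_i] = ρ α_i^∨` sends `1` to `∑_j a_{ij} X_j ≠ 0` (as `a_{ii} = 2`). -/

section Cartan

variable {n : ℕ} {g : GCM n} {L : Type} [LieRing L] [LieAlgebra ℂ L] (D : KacMoodyData g L)

theorem lie_coroot_e (k i : Fin n) :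
    ⁅(D.coroot k : L), D.e i⁆ = g.A.map ((↑) : ℤ → ℂ) k i • D.e i := by
  rw [D.lie_h_e, D.pairing, Matrix.map_apply]

theorem lie_coroot_f (k i : Fin n) :
    ⁅(D.coroot k : L), D.f i⁆ = -g.A.map ((↑) : ℤ → ℂ) k i • D.f i := by
  rw [D.lie_h_f, D.pairing, Matrix.map_apply]

variable (hA : IsUnit (g.A.map ((↑) : ℤ → ℂ)).det)
include hA

theorem lie_Hb_e (j i : Fin n) : ⁅Hb D j, D.e i⁆ = (if j = i then (1 : ℂ) else 0) • D.e i := by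
  simp only [Hb, sum_lie, smul_lie, lie_coroot_e, smul_smul, ← Finset.sum_smul]
  rw [← Matrix.mul_apply, Matrix.nonsing_inv_mul _ hA, Matrix.one_apply]

theorem lie_Hb_f (j i : Fin n) : ⁅Hb D j, D.f i⁆ = (if j = i then (-1 : ℂ) else 0) • D.f i := by
  simp only [Hb, sum_lie, smul_lie, lie_coroot_f, smul_smul, mul_neg, Finset.sum_neg_distrib,
    ← Finset.sum_smul]
  rw [← Matrix.mul_apply, Matrix.nonsing_inv_mul _ hA, Matrix.one_apply, apply_ite Neg.neg,
    neg_zero]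

theorem coroot_eq_sum_Hb (i : Fin n) :
    (D.coroot i : L) = ∑ j, g.A.map ((↑) : ℤ → ℂ) i j • Hb D j := by
  simp only [Hb, Finset.smul_sum, smul_smul]
  rw [Finset.sum_comm]
  simp only [← Finset.sum_smul, ← Matrix.mul_apply, Matrix.mul_nonsing_inv _ hA,
    Matrix.one_apply, ite_smul, one_smul, zero_smul, Finset.sum_ite_eq, Finset.mem_univ, if_true]

end Cartan

section Representation

variable {n : ℕ}

theorem apply_eq_mul_shiftOp (i : Fin n) (c : ℂ) (E : Module.End ℂ (MvPolynomial (Fin n) ℂ))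
    (hE : ∀ j p, E (X j * p) = (X j - C (if j = i then c else 0)) * E p) (p) :
    E p = E 1 * shiftOp i c p := by
  have shiftOp_X (j : Fin n) : shiftOp i c (X j) = X j - C (if j = i then c else 0) := by
    simp [shiftOp, apply_ite C]
  have shiftOp_mul (p q : MvPolynomial (Fin n) ℂ) :
      shiftOp i c (p * q) = shiftOp i c p * shiftOp i c q :=
    map_mul (aeval _) p q
  induction p using MvPolynomial.induction_on with
  | C a =>
    rw [← mul_one (C a), ← smul_eq_C_mul, map_smul, map_smul, smul_eq_C_mul, smul_eq_C_mul]
    simp [shiftOp, mul_comm]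
  | add p q hp hq => rw [map_add, map_add, mul_add, hp, hq]
  | mul_X p j hp =>
    rw [mul_comm, hE, hp, shiftOp_mul, shiftOp_X]
    ring

variable {L : Type} [LieRing L] [LieAlgebra ℂ L]
  (ρ : L →ₗ⁅ℂ⁆ Module.End ℂ (MvPolynomial (Fin n) ℂ))

theorem apply_X_mul_of_lie_eq_smul {h x : L} {j : Fin n} {c : ℂ} (hh : ρ h = mulX j)
    (hx : ⁅h, x⁆ = c • x) (p : MvPolynomial (Fin n) ℂ) :
    ρ x (X j * p) = (X j - C c) * ρ x p := by
  have h_comm := LinearMap.congr_fun (ρ.map_lie h x) p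
  rw [hx, hh, map_smul] at h_comm
  simp only [Ring.lie_def, LinearMap.sub_apply, Module.End.mul_apply, mulX,
    LinearMap.mulLeft_apply, LinearMap.smul_apply, smul_eq_C_mul] at h_comm
  linear_combination h_comm

end Representation

theorem ne_zero_of_lie_apply_one_ne_zero {R A : Type*} [CommRing R] [CommRing A] [Algebra R A]
    {E F S T : Module.End R A} (hE : ∀ p, E p = E 1 * S p) (hF : ∀ p, F p = F 1 * T p)
    (h : ⁅E, F⁆ 1 ≠ 0) : E 1 ≠ 0 ∧ F 1 ≠ 0 := by
  rw [Ring.lie_def, LinearMap.sub_apply, Module.End.mul_apply, Module.End.mul_apply,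
    hE, hF (E 1)] at h
  constructor <;> intro h0 <;> simp [h0] at h

theorem sum_smul_X_ne_zero {n : ℕ} {a : Fin n → ℂ} {i : Fin n} (ha : a i ≠ 0) :
    ∑ j, a j • (X j : MvPolynomial (Fin n) ℂ) ≠ 0 := by
  intro h
  exact ha (by simpa [Pi.single_apply] using congrArg (eval (Pi.single i 1)) h)

theorem isUnit_det_rankTwo {r s : ℤ} (hrs : r * s ≠ 4) :
    IsUnit ((!![2, -r; -s, 2] : Matrix (Fin 2) (Fin 2) ℤ).map ((↑) : ℤ → ℂ)).det := by
  rw [isUnit_iff_ne_zero, Matrix.det_fin_two]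
  simp only [Matrix.map_apply, Matrix.of_apply, Matrix.cons_val', Matrix.cons_val_zero,
    Matrix.cons_val_one, Matrix.empty_val', Matrix.cons_val_fin_one]
  push_cast
  intro h
  exact hrs (by exact_mod_cast (by linear_combination -h : (r : ℂ) * s = 4))

section TwistedAction

variable {n : ℕ} {g : GCM n} {L : Type} [LieRing L] [LieAlgebra ℂ L] (D : KacMoodyData g L)
  (hA : IsUnit (g.A.map ((↑) : ℤ → ℂ)).det)
  {ρ : L →ₗ⁅ℂ⁆ Module.End ℂ (MvPolynomial (Fin n) ℂ)} (hH : ∀ i, ρ (Hb D i) = mulX i)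
include hA hH

theorem apply_e_eq_mul_shiftOp (i : Fin n) (p : MvPolynomial (Fin n) ℂ) :
    ρ (D.e i) p = ρ (D.e i) 1 * shiftOp i 1 p :=
  apply_eq_mul_shiftOp i 1 _ (fun j ↦ apply_X_mul_of_lie_eq_smul ρ (hH j) (lie_Hb_e D hA j i)) p

theorem apply_f_eq_mul_shiftOp (i : Fin n) (p : MvPolynomial (Fin n) ℂ) :
    ρ (D.f i) p = ρ (D.f i) 1 * shiftOp i (-1) p :=
  apply_eq_mul_shiftOp i (-1) _
    (fun j ↦ apply_X_mul_of_lie_eq_smul ρ (hH j) (lie_Hb_f D hA j i)) p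

theorem apply_coroot_one (i : Fin n) :
    ρ (D.coroot i) 1 = ∑ j, g.A.map ((↑) : ℤ → ℂ) i j • X j := by
  simp only [coroot_eq_sum_Hb D hA, map_sum, map_smul, hH, LinearMap.sum_apply,
    LinearMap.smul_apply, mulX, LinearMap.mulLeft_apply, mul_one]

theorem apply_e_one_ne_zero_and_apply_f_one_ne_zero (i : Fin n) :
    ρ (D.e i) 1 ≠ 0 ∧ ρ (D.f i) 1 ≠ 0 := by
  refine ne_zero_of_lie_apply_one_ne_zero (apply_e_eq_mul_shiftOp D hA hH i)
    (apply_f_eq_mul_shiftOp D hA hH i) ?_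
  rw [← LieHom.map_lie, D.lie_e_f, if_pos rfl, apply_coroot_one D hA hH]
  exact sum_smul_X_ne_zero (i := i) (by simp [g.diag])

end TwistedAction

theorem rank_two_twisted_action_general (r s : ℤ)
    (hrs : r * s ≠ 4)
    (g : GCM 2) (hA : g.A = !![2, -r; -s, 2])
    (L : Type) [LieRing L] [LieAlgebra ℂ L] (D : KacMoodyData g L)
    (ρ : L →ₗ⁅ℂ⁆ Module.End ℂ (MvPolynomial (Fin 2) ℂ))
    (hH : ∀ i : Fin 2, ρ (Hb D i) = mulX i) :
    ∀ i : Fin 2,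
      ρ (D.e i) 1 ≠ 0 ∧ ρ (D.f i) 1 ≠ 0 ∧
      ∀ p : MvPolynomial (Fin 2) ℂ,
        ρ (D.e i) p = ρ (D.e i) 1 * shiftOp i 1 p ∧
        ρ (D.f i) p = ρ (D.f i) 1 * shiftOp i (-1) p := by
  have hdet : IsUnit (g.A.map ((↑) : ℤ → ℂ)).det := hA ▸ isUnit_det_rankTwo hrs
  intro i
  obtain ⟨he, hf⟩ := apply_e_one_ne_zero_and_apply_f_one_ne_zero D hdet hH i
  exact ⟨he, hf, fun p ↦ ⟨apply_e_eq_mul_shiftOp D hdet hH i p,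
    apply_f_eq_mul_shiftOp D hdet hH i p⟩⟩

/-- Lemma 6: let `g` be the Kac-Moody algebra of the invertible generalized
Cartan matrix `A(r,s) = [[2,−r],[−s,2]]` (`r,s` positive, `rs ≠ 4`), with Cartan
basis `(H_1,H_2)ᵀ = A⁻¹(α_1^∨,α_2^∨)ᵀ`.  If `M` is a `g`-module which is free of
rank 1 over `U(h)`, identified with `ℂ[H_1,H_2]` (so each `H_i` acts by
multiplication), then with `E_i = e_i·1 ≠ 0` and `F_i = f_i·1 ≠ 0` one has
`H_i·g = H_i g`, `e_i·g = E_i σ_i(g)` and `f_i·g = F_i σ_i⁻¹(g)` for all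
`g ∈ ℂ[H_1,H_2]`. -/
theorem rank_two_twisted_action (r s : ℤ) (hr : 0 < r) (hs : 0 < s)
    (hrs : r * s ≠ 4)
    (g : GCM 2) (hA : g.A = !![2, -r; -s, 2])
    (L : Type) [LieRing L] [LieAlgebra ℂ L] (D : KacMoodyData g L)
    (ρ : L →ₗ⁅ℂ⁆ Module.End ℂ (MvPolynomial (Fin 2) ℂ))
    (hH : ∀ i : Fin 2, ρ (Hb D i) = mulX i) :
    ∀ i : Fin 2,
      ρ (D.e i) 1 ≠ 0 ∧ ρ (D.f i) 1 ≠ 0 ∧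
      ∀ p : MvPolynomial (Fin 2) ℂ,
        ρ (D.e i) p = ρ (D.e i) 1 * shiftOp i 1 p ∧
        ρ (D.f i) p = ρ (D.f i) 1 * shiftOp i (-1) p :=
  rank_two_twisted_action_general r s hrs g hA L D ρ hH

end KM
end

section
/- Let g be a Kac-Moody algebra with Cartan subalgebra h, let Z be an abelian complex Lie algebra, g̃ = Z ⊕ g with [Z,g̃] = 0, and h̃ = Z ⊕ h. Then H(g) = ∅ if and only if H(g̃) = ∅; that is, there exists a g-module free of rank 1 over U(h) if and only if there exists a g̃-module free of rank 1 over U(h̃). -/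
open scoped BigOperators
open MvPolynomial

namespace KM

attribute [local instance 100] LieRing.ofAssociativeRing

end KM

/-! Since `Z` is central, `h̃ ≅ Z × h` as Lie algebras, hence `U(h̃) ≅ U(Z) ⊗ U(h)`.
If `M ∈ H(g)`, then `U(Z) ⊗ M`, with `Z` acting by left multiplication on the first factor and
`g` on the second, is free of rank one over `U(Z) ⊗ U(h) ≅ U(h̃)`. Conversely, if `M ∈ H(g̃)`,
then `Z·M` is a `g̃`-submodule and `M / Z·M ≅ U(h̃) / Z·U(h̃) ≅ U(h)` as `U(h)`-modules. -/

open scoped TensorProduct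

attribute [local instance 100] LieRing.ofAssociativeRing

namespace UniversalEnvelopingAlgebra

variable {R K K₁ K₂ K₃ : Type*} [CommRing R] [LieRing K] [LieAlgebra R K]
  [LieRing K₁] [LieAlgebra R K₁] [LieRing K₂] [LieAlgebra R K₂] [LieRing K₃] [LieAlgebra R K₃]

@[elab_as_elim]
theorem induction {motive : UniversalEnvelopingAlgebra R K → Prop}
    (algebraMap : ∀ r : R, motive (algebraMap R _ r)) (ι : ∀ x : K, motive (ι R x))
    (mul : ∀ a b, motive a → motive b → motive (a * b))
    (add : ∀ a b, motive a → motive b → motive (a + b)) (a : UniversalEnvelopingAlgebra R K) :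
    motive a := by
  obtain ⟨t, rfl⟩ := Quot.exists_rep a
  change motive (mkAlgHom R K t)
  induction t using TensorAlgebra.induction with
  | algebraMap r => simpa only [AlgHom.commutes] using algebraMap r
  | ι x => exact ι x
  | mul a b ha hb => simpa only [map_mul] using mul _ _ ha hb
  | add a b ha hb => simpa only [map_add] using add _ _ ha hb

theorem commute_of_commute_ι {A : Type*} [Ring A] [Algebra R A]
    (f : UniversalEnvelopingAlgebra R K₁ →ₐ[R] A) (g : UniversalEnvelopingAlgebra R K₂ →ₐ[R] A)
    (h : ∀ x y, Commute (f (ι R x)) (g (ι R y))) (a : UniversalEnvelopingAlgebra R K₁)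
    (b : UniversalEnvelopingAlgebra R K₂) : Commute (f a) (g b) := by
  induction a using induction with
  | algebraMap r => simpa only [AlgHom.commutes] using Algebra.commute_algebraMap_left r _
  | ι x =>
    induction b using induction with
    | algebraMap r => simpa only [AlgHom.commutes] using Algebra.commute_algebraMap_right r _
    | ι y => exact h x y
    | mul b b' hb hb' => simpa only [map_mul] using hb.mul_right hb'
    | add b b' hb hb' => simpa only [map_add] using hb.add_right hb'
  | mul a a' ha ha' => simpa only [map_mul] using ha.mul_left ha'
  | add a a' ha ha' => simpa only [map_add] using ha.add_left ha'

variable (R) in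
noncomputable def map (f : K₁ →ₗ⁅R⁆ K₂) :
    UniversalEnvelopingAlgebra R K₁ →ₐ[R] UniversalEnvelopingAlgebra R K₂ :=
  lift R ((ι R).comp f)

@[simp]
theorem map_ι (f : K₁ →ₗ⁅R⁆ K₂) (x : K₁) : map R f (ι R x) = ι R (f x) :=
  lift_ι_apply R _ x

theorem map_comp (g : K₂ →ₗ⁅R⁆ K₃) (f : K₁ →ₗ⁅R⁆ K₂) :
    map R (g.comp f) = (map R g).comp (map R f) :=
  hom_ext R <| LieHom.ext fun x => by
    simp only [LieHom.comp_apply, AlgHom.coe_toLieHom, AlgHom.comp_apply, map_ι]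

theorem map_id : map R (LieHom.id : K →ₗ⁅R⁆ K) = AlgHom.id R _ :=
  hom_ext R <| LieHom.ext fun x => by
    simp only [LieHom.comp_apply, AlgHom.coe_toLieHom, map_ι, LieHom.id_apply, AlgHom.id_apply]

variable (R) in
noncomputable def mapEquiv (e : K₁ ≃ₗ⁅R⁆ K₂) :
    UniversalEnvelopingAlgebra R K₁ ≃ₐ[R] UniversalEnvelopingAlgebra R K₂ :=
  AlgEquiv.ofAlgHom (map R e.toLieHom) (map R e.symm.toLieHom)
    (by rw [← map_comp, ← map_id]; congr 1; ext; simp)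
    (by rw [← map_comp, ← map_id]; congr 1; ext; simp)

@[simp]
theorem mapEquiv_ι (e : K₁ ≃ₗ⁅R⁆ K₂) (x : K₁) : mapEquiv R e (ι R x) = ι R (e x) :=
  map_ι _ x

variable (R K₁ K₂) in
noncomputable def prodι :
    K₁ × K₂ →ₗ⁅R⁆ UniversalEnvelopingAlgebra R K₁ ⊗[R] UniversalEnvelopingAlgebra R K₂ where
  toFun p := ι R p.1 ⊗ₜ 1 + 1 ⊗ₜ ι R p.2
  map_add' p q := by
    simp only [Prod.fst_add, Prod.snd_add, map_add, TensorProduct.add_tmul, TensorProduct.tmul_add]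
    abel
  map_smul' c p := by
    simp only [Prod.smul_fst, Prod.smul_snd, map_smul, TensorProduct.smul_tmul',
      TensorProduct.tmul_smul, RingHom.id_apply, smul_add]
  map_lie' {p q} := by
    simp only [LieAlgebra.Prod.bracket_apply, LieHom.map_lie, LieRing.of_associative_ring_bracket,
      add_mul, mul_add, Algebra.TensorProduct.tmul_mul_tmul, one_mul, mul_one,
      TensorProduct.sub_tmul, TensorProduct.tmul_sub]
    abel

@[simp]
theorem prodι_apply (p : K₁ × K₂) : prodι R K₁ K₂ p = ι R p.1 ⊗ₜ 1 + 1 ⊗ₜ ι R p.2 := rfl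

variable (R K₁ K₂) in
noncomputable def prodEquiv :
    UniversalEnvelopingAlgebra R (K₁ × K₂) ≃ₐ[R]
      UniversalEnvelopingAlgebra R K₁ ⊗[R] UniversalEnvelopingAlgebra R K₂ :=
  AlgEquiv.ofAlgHom (lift R (prodι R K₁ K₂))
    (Algebra.TensorProduct.lift (map R (LieHom.inl R K₁ K₂)) (map R (LieHom.inr R K₁ K₂))
      (commute_of_commute_ι _ _ fun x y => by
        rw [map_ι, map_ι, commute_iff_lie_eq, ← LieHom.map_lie]
        simp only [LieAlgebra.Prod.bracket_apply, LieHom.inl_apply, LieHom.inr_apply, lie_zero,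
          zero_lie, Prod.mk_zero_zero, map_zero]))
    (by
      ext x
      · simp only [AlgHom.toLieHom_apply, LieHom.comp_apply, AlgHom.comp_apply,
          Algebra.TensorProduct.includeLeft_apply, Algebra.TensorProduct.lift_tmul, map_one,
          mul_one, map_ι, lift_ι_apply, prodι_apply, LieHom.inl_apply, AlgHom.id_apply,
          map_zero, TensorProduct.tmul_zero, add_zero]
      · simp only [AlgHom.toLieHom_apply, LieHom.comp_apply, AlgHom.comp_apply,
          AlgHom.restrictScalars_apply, Algebra.TensorProduct.includeRight_apply,
          Algebra.TensorProduct.lift_tmul, map_one, one_mul, map_ι, lift_ι_apply, prodι_apply,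
          LieHom.inr_apply, AlgHom.id_apply, map_zero, TensorProduct.zero_tmul, zero_add])
    (hom_ext R <| LieHom.ext fun p => by
      simp only [AlgHom.toLieHom_apply, LieHom.comp_apply, AlgHom.comp_apply, lift_ι_apply,
        prodι_apply, map_add, Algebra.TensorProduct.lift_tmul, map_one, mul_one, one_mul, map_ι,
        LieHom.inl_apply, LieHom.inr_apply, AlgHom.id_apply]
      rw [← map_add, Prod.mk_add_mk, add_zero, zero_add])

@[simp]
theorem prodEquiv_ι (p : K₁ × K₂) :
    prodEquiv R K₁ K₂ (ι R p) = ι R p.1 ⊗ₜ 1 + 1 ⊗ₜ ι R p.2 :=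
  lift_ι_apply R _ p

section OrbitMap

variable {M A : Type*} [AddCommGroup M] [Module R M] [Ring A] [Algebra R A]

noncomputable def orbitMap (ρ : K →ₗ⁅R⁆ Module.End R M) (v : M) :
    UniversalEnvelopingAlgebra R K →ₗ[R] M :=
  LinearMap.applyₗ v ∘ₗ (lift R ρ).toLinearMap

theorem orbitMap_apply (ρ : K →ₗ⁅R⁆ Module.End R M) (v : M) (u : UniversalEnvelopingAlgebra R K) :
    orbitMap ρ v u = lift R ρ u v :=
  rfl

theorem orbitMap_one (ρ : K →ₗ⁅R⁆ Module.End R M) (v : M) : orbitMap ρ v 1 = v := by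
  rw [orbitMap_apply, map_one, Module.End.one_apply]

theorem orbitMap_ι_mul (ρ : K →ₗ⁅R⁆ Module.End R M) (v : M) (x : K)
    (u : UniversalEnvelopingAlgebra R K) : orbitMap ρ v (ι R x * u) = ρ x (orbitMap ρ v u) := by
  rw [orbitMap_apply, map_mul, lift_ι_apply, Module.End.mul_apply, orbitMap_apply]

theorem orbitMap_eq_comp (ρ : K →ₗ⁅R⁆ Module.End R M) (Φ : UniversalEnvelopingAlgebra R K →ₐ[R] A)
    (T : A →ₗ[R] M) (hT : ∀ x a, ρ x (T a) = T (Φ (ι R x) * a)) :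
    orbitMap ρ (T 1) = T ∘ₗ Φ.toLinearMap := by
  have key : ∀ u a, lift R ρ u (T a) = T (Φ u * a) := by
    intro u
    induction u using UniversalEnvelopingAlgebra.induction with
    | algebraMap r => simp [Algebra.algebraMap_eq_smul_one]
    | ι x => simpa only [lift_ι_apply] using hT x
    | mul u w hu hw => intro a; rw [map_mul, Module.End.mul_apply, hw, hu, map_mul Φ, mul_assoc]
    | add u w hu hw => intro a; rw [map_add, LinearMap.add_apply, hu, hw, map_add, add_mul, map_add]
  exact LinearMap.ext fun u => (key u 1).trans (congrArg T (mul_one _))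

def IsFreeRankOne (ρ : K →ₗ⁅R⁆ Module.End R M) : Prop :=
  ∃ v, Function.Bijective (orbitMap ρ v)

end OrbitMap

end UniversalEnvelopingAlgebra

open UniversalEnvelopingAlgebra

namespace KM

structure CentralSum (R Z L Lt : Type*) [CommRing R] [LieRing Z] [LieAlgebra R Z] [LieRing L]
    [LieAlgebra R L] [LieRing Lt] [LieAlgebra R Lt] where
  inl : Z →ₗ⁅R⁆ Lt
  inr : L →ₗ⁅R⁆ Lt
  inl_lie : ∀ (z : Z) (x : Lt), ⁅inl z, x⁆ = 0
  bijective : Function.Bijective fun p : Z × L => inl p.1 + inr p.2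

namespace CentralSum

variable {R Z L Lt : Type*} [CommRing R] [LieRing Z] [LieAlgebra R Z] [LieRing L]
  [LieAlgebra R L] [LieRing Lt] [LieAlgebra R Lt] (S : CentralSum R Z L Lt)

theorem lie_inl (x : Lt) (z : Z) : ⁅x, S.inl z⁆ = 0 := by
  rw [← lie_skew, S.inl_lie, neg_zero]

theorem inl_injective : Function.Injective S.inl := fun z w h =>
  congrArg Prod.fst <| S.bijective.1 (a₁ := (z, 0)) (a₂ := (w, 0)) <| by
    simpa only [map_zero, add_zero] using h

theorem lie_eq_zero (S : CentralSum R Z L Lt) (z w : Z) : ⁅z, w⁆ = 0 :=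
  S.inl_injective (by rw [LieHom.map_lie, S.inl_lie, map_zero])

def toLieHom : Z × L →ₗ⁅R⁆ Lt where
  toLinearMap := S.inl.toLinearMap.coprod S.inr.toLinearMap
  map_lie' {p q} := by
    change S.inl ⁅p.1, q.1⁆ + S.inr ⁅p.2, q.2⁆ = ⁅S.inl p.1 + S.inr p.2, S.inl q.1 + S.inr q.2⁆
    rw [S.lie_eq_zero, map_zero, zero_add, add_lie, lie_add, lie_add, S.inl_lie, S.inl_lie,
      S.lie_inl, LieHom.map_lie, zero_add, zero_add, zero_add]

noncomputable def equiv : (Z × L) ≃ₗ⁅R⁆ Lt :=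
  LieEquiv.ofBijective S.toLieHom S.bijective

theorem equiv_apply (p : Z × L) : S.equiv p = S.inl p.1 + S.inr p.2 := rfl

variable (H : LieSubalgebra R L)

def cartanExt : LieSubalgebra R Lt :=
  LieSubalgebra.lieSpan R Lt (Set.range S.inl ∪ S.inr '' H)

noncomputable def cartanHom : Z × H →ₗ⁅R⁆ Lt :=
  S.equiv.toLieHom.comp (LieHom.prodMap LieHom.id H.incl)

theorem range_cartanHom : (S.cartanHom H).range = S.cartanExt H := by
  apply le_antisymm
  · rintro _ ⟨p, rfl⟩
    exact add_mem (LieSubalgebra.subset_lieSpan (.inl ⟨p.1, rfl⟩))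
      (LieSubalgebra.subset_lieSpan (.inr ⟨p.2, p.2.2, rfl⟩))
  · rw [cartanExt, LieSubalgebra.lieSpan_le]
    rintro _ (⟨z, rfl⟩ | ⟨y, hy, rfl⟩)
    · exact ⟨(z, 0), by simp [cartanHom, equiv_apply]⟩
    · exact ⟨(0, ⟨y, hy⟩), by simp [cartanHom, equiv_apply]⟩

noncomputable def cartanEquiv : (Z × H) ≃ₗ⁅R⁆ S.cartanExt H :=
  (LieEquiv.ofInjective (S.cartanHom H)
      (S.equiv.injective.comp (Prod.map_injective.mpr ⟨Function.injective_id,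
        Subtype.val_injective⟩))).trans
    (LieEquiv.ofEq _ _ (congrArg _ (S.range_cartanHom H)))

theorem coe_cartanEquiv (p : Z × H) : (S.cartanEquiv H p : Lt) = S.inl p.1 + S.inr p.2 := rfl

theorem coe_cartanEquiv_mk_zero (z : Z) : (S.cartanEquiv H (z, 0) : Lt) = S.inl z := by
  rw [coe_cartanEquiv, ZeroMemClass.coe_zero, map_zero, add_zero]

theorem coe_cartanEquiv_zero_mk (h : H) : (S.cartanEquiv H (0, h) : Lt) = S.inr h := by
  rw [coe_cartanEquiv, map_zero, zero_add]

theorem equiv_symm_cartanEquiv (p : Z × H) :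
    S.equiv.symm (S.cartanEquiv H p) = (p.1, (p.2 : L)) :=
  S.equiv.symm_apply_apply (p.1, (p.2 : L))

noncomputable def cartanAlgEquiv :
    UniversalEnvelopingAlgebra R (S.cartanExt H) ≃ₐ[R]
      UniversalEnvelopingAlgebra R Z ⊗[R] UniversalEnvelopingAlgebra R H :=
  (mapEquiv R (S.cartanEquiv H).symm).trans (prodEquiv R Z H)

theorem cartanAlgEquiv_ι (p : Z × H) :
    S.cartanAlgEquiv H (ι R (S.cartanEquiv H p)) = ι R p.1 ⊗ₜ 1 + 1 ⊗ₜ ι R p.2 := by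
  simp only [cartanAlgEquiv, AlgEquiv.trans_apply, mapEquiv_ι, LieEquiv.symm_apply_apply,
    prodEquiv_ι]

variable {M : Type*} [AddCommGroup M] [Module R M]

noncomputable def tensorRep (ρ : L →ₗ⁅R⁆ Module.End R M) :
    Lt →ₗ⁅R⁆ Module.End R (UniversalEnvelopingAlgebra R Z ⊗[R] M) :=
  let ρZ := (Algebra.lmul R _).toLieHom.comp
    ((ι R).comp ((LieHom.fst R Z L).comp S.equiv.symm.toLieHom))
  let ρL := ρ.comp ((LieHom.snd R Z L).comp S.equiv.symm.toLieHom)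
  letI := LieRingModule.compLieHom (UniversalEnvelopingAlgebra R Z) ρZ
  letI := LieModule.compLieHom (R := R) (UniversalEnvelopingAlgebra R Z) ρZ
  letI := LieRingModule.compLieHom M ρL
  letI := LieModule.compLieHom (R := R) M ρL
  LieModule.toEnd R Lt _

theorem tensorRep_tmul (ρ : L →ₗ⁅R⁆ Module.End R M) (x : Lt) (a : UniversalEnvelopingAlgebra R Z)
    (m : M) : S.tensorRep ρ x (a ⊗ₜ m) =
      (ι R (S.equiv.symm x).1 * a) ⊗ₜ m + a ⊗ₜ ρ (S.equiv.symm x).2 m :=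
  rfl

theorem isFreeRankOne_tensorRep {ρ : L →ₗ⁅R⁆ Module.End R M}
    (h : IsFreeRankOne (ρ.comp H.incl)) :
    IsFreeRankOne ((S.tensorRep ρ).comp (S.cartanExt H).incl) := by
  obtain ⟨v, hv⟩ := h
  let β := LinearEquiv.ofBijective _ hv
  let T := (β.lTensor (UniversalEnvelopingAlgebra R Z)).toLinearMap
  have hT : ∀ x a, (S.tensorRep ρ).comp (S.cartanExt H).incl x (T a) =
      T (S.cartanAlgEquiv H (ι R x) * a) := by
    intro x a
    rw [← (S.cartanEquiv H).apply_symm_apply x]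
    generalize (S.cartanEquiv H).symm x = p
    induction a using TensorProduct.induction_on with
    | zero => simp only [map_zero, mul_zero]
    | tmul c b =>
      simp only [LieHom.comp_apply, LieSubalgebra.coe_incl, tensorRep_tmul,
        equiv_symm_cartanEquiv, cartanAlgEquiv_ι, add_mul, Algebra.TensorProduct.tmul_mul_tmul,
        one_mul, map_add, T, LinearEquiv.coe_lTensor, LinearMap.lTensor_tmul,
        LinearEquiv.coe_coe, β, LinearEquiv.ofBijective_apply, orbitMap_ι_mul]
    | add a a' ha ha' => simp only [map_add, mul_add, ha, ha']
  refine ⟨1 ⊗ₜ v, ?_⟩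
  have hT1 : T 1 = 1 ⊗ₜ v := by
    simp only [T, β, LinearEquiv.coe_lTensor, Algebra.TensorProduct.one_def,
      LinearMap.lTensor_tmul, LinearEquiv.coe_coe, LinearEquiv.ofBijective_apply, orbitMap_one]
  rw [← hT1, orbitMap_eq_comp _ (S.cartanAlgEquiv H).toAlgHom T hT]
  exact (β.lTensor _).bijective.comp (S.cartanAlgEquiv H).bijective

noncomputable def cartanProj :
    UniversalEnvelopingAlgebra R (S.cartanExt H) →ₐ[R] UniversalEnvelopingAlgebra R H :=
  map R ((LieHom.snd R Z H).comp (S.cartanEquiv H).symm.toLieHom)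

noncomputable def cartanIncl :
    UniversalEnvelopingAlgebra R H →ₐ[R] UniversalEnvelopingAlgebra R (S.cartanExt H) :=
  map R ((S.cartanEquiv H).toLieHom.comp (LieHom.inr R Z H))

theorem cartanProj_comp_cartanIncl : (S.cartanProj H).comp (S.cartanIncl H) = AlgHom.id R _ := by
  rw [cartanProj, cartanIncl, ← UniversalEnvelopingAlgebra.map_comp,
    ← UniversalEnvelopingAlgebra.map_id]
  congr 1
  ext h
  simp

variable (M) [LieRingModule Lt M] [LieModule R Lt M]

def inlSpan : LieSubmodule R Lt M where
  toSubmodule := Submodule.span R {m | ∃ z m', ⁅S.inl z, m'⁆ = m}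
  lie_mem {x m} hm := by
    induction hm using Submodule.span_induction with
    | mem m hm =>
      obtain ⟨z, m', rfl⟩ := hm
      exact Submodule.subset_span ⟨z, ⁅x, m'⁆, by rw [leibniz_lie x, S.lie_inl, zero_lie, zero_add]⟩
    | zero => rw [lie_zero]; exact Submodule.zero_mem _
    | add m m' _ _ hm hm' => rw [lie_add]; exact Submodule.add_mem _ hm hm'
    | smul r m _ hm => rw [lie_smul]; exact Submodule.smul_mem _ r hm

theorem inl_lie_mk (z : Z) (m : M) :
    ⁅S.inl z, (LieSubmodule.Quotient.mk m : M ⧸ S.inlSpan M)⁆ = 0 :=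
  LieSubmodule.Quotient.mk_eq_zero'.mpr (Submodule.subset_span ⟨z, m, rfl⟩)

variable {M}

noncomputable def quotientMap (v : M) : UniversalEnvelopingAlgebra R H →ₗ[R] M ⧸ S.inlSpan M :=
  (LieSubmodule.Quotient.mk' (S.inlSpan M)).toLinearMap ∘ₗ
    orbitMap ((LieModule.toEnd R Lt M).comp (S.cartanExt H).incl) v ∘ₗ (S.cartanIncl H).toLinearMap

theorem lie_cartanEquiv_quotientMap (v : M) (p : Z × H) (b : UniversalEnvelopingAlgebra R H) :
    ⁅(S.cartanEquiv H p : Lt), S.quotientMap H v b⁆ = S.quotientMap H v (ι R p.2 * b) := by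
  simp only [quotientMap, LinearMap.comp_apply, AlgHom.toLinearMap_apply,
    LieModuleHom.coe_toLinearMap, LieSubmodule.Quotient.mk'_apply]
  rw [coe_cartanEquiv, add_lie, inl_lie_mk, zero_add, map_mul, cartanIncl, map_ι, orbitMap_ι_mul,
    ← coe_cartanEquiv_zero_mk]
  rfl

theorem quotientMap_one (v : M) : S.quotientMap H v 1 = LieSubmodule.Quotient.mk v := by
  simp only [quotientMap, LinearMap.comp_apply, AlgHom.toLinearMap_apply, map_one, orbitMap_one,
    LieModuleHom.coe_toLinearMap, LieSubmodule.Quotient.mk'_apply]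

theorem orbitMap_quotient (v : M) :
    orbitMap (((LieModule.toEnd R Lt (M ⧸ S.inlSpan M)).comp S.inr).comp H.incl)
      (LieSubmodule.Quotient.mk v) = S.quotientMap H v := by
  rw [← S.quotientMap_one, orbitMap_eq_comp _ (AlgHom.id R _) _ fun h b => ?_]
  · rfl
  · have h_act := S.lie_cartanEquiv_quotientMap H v (0, h) b
    rw [coe_cartanEquiv_zero_mk] at h_act
    exact h_act

theorem quotientMap_comp_cartanProj (v : M) :
    S.quotientMap H v ∘ₗ (S.cartanProj H).toLinearMap =
      (LieSubmodule.Quotient.mk' (S.inlSpan M)).toLinearMap ∘ₗ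
        orbitMap ((LieModule.toEnd R Lt M).comp (S.cartanExt H).incl) v := by
  let ρQ := (LieModule.toEnd R Lt (M ⧸ S.inlSpan M)).comp (S.cartanExt H).incl
  have hproj :
      orbitMap ρQ (S.quotientMap H v 1) = S.quotientMap H v ∘ₗ (S.cartanProj H).toLinearMap :=
    orbitMap_eq_comp ρQ _ _ fun x b => by
      rw [← (S.cartanEquiv H).apply_symm_apply x]
      generalize (S.cartanEquiv H).symm x = p
      simp only [cartanProj, map_ι, LieHom.comp_apply, LieEquiv.coe_toLieHom,
        LieEquiv.symm_apply_apply, LieHom.snd_apply]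
      exact S.lie_cartanEquiv_quotientMap H v p b
  have hmk := orbitMap_eq_comp ρQ (AlgHom.id R _)
    ((LieSubmodule.Quotient.mk' (S.inlSpan M)).toLinearMap ∘ₗ
      orbitMap ((LieModule.toEnd R Lt M).comp (S.cartanExt H).incl) v)
    fun x a => by
      rw [AlgHom.id_apply, LinearMap.comp_apply, LinearMap.comp_apply, orbitMap_ι_mul]; rfl
  rw [← hproj, quotientMap_one]
  simpa [orbitMap_one] using hmk

theorem quotientMap_bijective {v : M}
    (hv : Function.Bijective (orbitMap ((LieModule.toEnd R Lt M).comp (S.cartanExt H).incl) v)) :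
    Function.Bijective (S.quotientMap H v) := by
  let β := LinearEquiv.ofBijective _ hv
  have hker : (S.inlSpan M).toSubmodule ≤
      LinearMap.ker ((S.cartanProj H).toLinearMap ∘ₗ β.symm.toLinearMap) := by
    refine Submodule.span_le.mpr ?_
    rintro _ ⟨z, m, rfl⟩
    obtain ⟨u, rfl⟩ := β.surjective m
    have hinl : ⁅S.inl z, β u⁆ = β (ι R (S.cartanEquiv H (z, 0)) * u) := by
      rw [LinearEquiv.ofBijective_apply, LinearEquiv.ofBijective_apply, orbitMap_ι_mul,
        LieHom.comp_apply, LieModule.toEnd_apply_apply, LieSubalgebra.coe_incl,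
        coe_cartanEquiv_mk_zero]
    simp only [SetLike.mem_coe, LinearMap.mem_ker, LinearMap.comp_apply, LinearEquiv.coe_coe, hinl,
      LinearEquiv.symm_apply_apply, AlgHom.toLinearMap_apply, map_mul, cartanProj, map_ι,
      LieHom.comp_apply, LieEquiv.coe_toLieHom, LieEquiv.symm_apply_apply, LieHom.snd_apply,
      map_zero, zero_mul]
  let κ := (S.inlSpan M).toSubmodule.liftQ _ hker
  have hκ : ∀ b, κ (S.quotientMap H v b) = b := fun b => by
    simpa [κ, quotientMap, β] using
      AlgHom.congr_fun (S.cartanProj_comp_cartanIncl H) b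
  refine ⟨Function.LeftInverse.injective hκ, fun q => ?_⟩
  obtain ⟨m, rfl⟩ := LieSubmodule.Quotient.surjective_mk' _ q
  obtain ⟨u, rfl⟩ := hv.2 m
  exact ⟨S.cartanProj H u, LinearMap.congr_fun (S.quotientMap_comp_cartanProj H v) u⟩

theorem isFreeRankOne_quotient
    (h : IsFreeRankOne ((LieModule.toEnd R Lt M).comp (S.cartanExt H).incl)) :
    IsFreeRankOne (((LieModule.toEnd R Lt (M ⧸ S.inlSpan M)).comp S.inr).comp H.incl) := by
  obtain ⟨v, hv⟩ := h
  exact ⟨_, S.orbitMap_quotient H v ▸ S.quotientMap_bijective H hv⟩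

end CentralSum

theorem HObject.nonempty_of_isFreeRankOne {L : Type} [LieRing L] [LieAlgebra ℂ L]
    {H : LieSubalgebra ℂ L} {M : Type} [AddCommGroup M] [Module ℂ M]
    (ρ : L →ₗ⁅ℂ⁆ Module.End ℂ M) (h : IsFreeRankOne (ρ.comp H.incl)) : Nonempty (HObject L H) :=
  letI := LieRingModule.compLieHom M ρ
  letI := LieModule.compLieHom (R := ℂ) M ρ
  ⟨⟨M, h⟩⟩

theorem CentralSum.nonempty_hObject_iff {Z L Lt : Type} [LieRing Z] [LieAlgebra ℂ Z] [LieRing L]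
    [LieAlgebra ℂ L] [LieRing Lt] [LieAlgebra ℂ Lt] (S : CentralSum ℂ Z L Lt)
    (H : LieSubalgebra ℂ L) :
    Nonempty (HObject L H) ↔ Nonempty (HObject Lt (S.cartanExt H)) := by
  constructor
  · rintro ⟨⟨M, hM⟩⟩
    exact HObject.nonempty_of_isFreeRankOne _ (S.isFreeRankOne_tensorRep H hM)
  · rintro ⟨⟨M, hM⟩⟩
    exact HObject.nonempty_of_isFreeRankOne _ (S.isFreeRankOne_quotient H hM)

theorem H_empty_iff_ext_H_empty_general {n : ℕ} (g : GCM n)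
    (L : Type) [LieRing L] [LieAlgebra ℂ L] (D : KacMoodyData g L)
    (Z : Type) [LieRing Z] [LieAlgebra ℂ Z]
    (Lt : Type) [LieRing Lt] [LieAlgebra ℂ Lt]
    (jZ : Z →ₗ⁅ℂ⁆ Lt) (jL : L →ₗ⁅ℂ⁆ Lt)
    (hcomm : ∀ (z : Z) (x : Lt), ⁅jZ z, x⁆ = 0)
    (hdirect : Function.Bijective fun p : Z × L => jZ p.1 + jL p.2) :
    (¬ Nonempty (HObject L D.H)) ↔
      ¬ Nonempty (HObject Lt
        (LieSubalgebra.lieSpan ℂ Lt (Set.range ⇑jZ ∪ ⇑jL '' (D.H : Set L)))) :=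
  not_congr (CentralSum.nonempty_hObject_iff ⟨jZ, jL, hcomm, hdirect⟩ D.H)

/-- Lemma 14(3): let `g` be a Kac-Moody algebra with Cartan subalgebra `h`, let `Z`
be an abelian complex Lie algebra and let `g̃ = Z ⊕ g` (with `[Z, g̃] = 0`) with
Cartan subalgebra `h̃ = Z ⊕ h`.  Then `H(g) = ∅` if and only if `H(g̃) = ∅`. -/
theorem H_empty_iff_ext_H_empty {n : ℕ} (g : GCM n)
    (L : Type) [LieRing L] [LieAlgebra ℂ L] (D : KacMoodyData g L)
    (Z : Type) [LieRing Z] [LieAlgebra ℂ Z] (hZ : ∀ z w : Z, ⁅z, w⁆ = 0)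
    (Lt : Type) [LieRing Lt] [LieAlgebra ℂ Lt]
    (jZ : Z →ₗ⁅ℂ⁆ Lt) (jL : L →ₗ⁅ℂ⁆ Lt)
    (hcomm : ∀ (z : Z) (x : Lt), ⁅jZ z, x⁆ = 0)
    (hdirect : Function.Bijective fun p : Z × L => jZ p.1 + jL p.2) :
    (¬ Nonempty (HObject L D.H)) ↔
      ¬ Nonempty (HObject Lt
        (LieSubalgebra.lieSpan ℂ Lt (Set.range ⇑jZ ∪ ⇑jL '' (D.H : Set L)))) :=
  H_empty_iff_ext_H_empty_general g L D Z Lt jZ jL hcomm hdirect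

end KM
end
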